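/- arXiv:1512.08161 — 2 statements merged into one kernel-verified Lean document; each statement's English description precedes it below -/
import Mathlib

section
/- For the cost c(x,y) = 1/|x−y|², for distinct points y₁, y₂ ∈ ℝ^d and a ≥ 0, let ψ(x) = |x−y₂|⁻² − |x−y₁|⁻² − a on ℝ^d ∖ {y₁, y₂}. Then at any point x of the level set {ψ = 0}, for every unit vector τ orthogonal to ∇ψ(x), one has ∂²_{ττ}ψ(x) ≤ 0. -/
/-!
Along the line `t ↦ x + t • τ` each term of `ψ` is the reciprocal of a quadratic `A + B t + t²`,
whose second derivative at `0` is `2B²/A³ - 2/A²`. Orthogonality of `τ` to `∇ψ(x)` says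
`⟪τ, x - y₁⟫ / |x - y₁|⁴ = ⟪τ, x - y₂⟫ / |x - y₂|⁴ =: k`, so the tangential second derivative is
`8k² (|x - y₂|² - |x - y₁|²) + 2 (|x - y₁|⁻⁴ - |x - y₂|⁻⁴)`. Both terms are `≤ 0`, because
`ψ(x) = 0` with `a ≥ 0` forces `|x - y₂| ≤ |x - y₁|`.
-/

open Filter Topology
open scoped RealInnerProductSpace

theorem norm_add_smul_sub_sq {E : Type*} [NormedAddCommGroup E] [InnerProductSpace ℝ E]
    (x y v : E) (t : ℝ) :
    ‖x + t • v - y‖ ^ 2 = ‖x - y‖ ^ 2 + 2 * ⟪v, x - y⟫ * t + ‖v‖ ^ 2 * t ^ 2 := by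
  rw [add_sub_right_comm, norm_add_sq_real, real_inner_smul_right, real_inner_comm, norm_smul,
    mul_pow, Real.norm_eq_abs, sq_abs]
  ring

theorem hasDerivAt_quadratic (A B C t : ℝ) :
    HasDerivAt (fun t => A + B * t + C * t ^ 2) (B + 2 * C * t) t := by
  have := (((hasDerivAt_id t).const_mul B).const_add A).fun_add ((hasDerivAt_pow 2 t).const_mul C)
  exact this.congr_deriv (by simp; ring)

section InvQuadratic

variable {A B C : ℝ}

theorem deriv_inv_quadratic_eventuallyEq (hA : A ≠ 0) :
    deriv (fun t => (A + B * t + C * t ^ 2)⁻¹) =ᶠ[𝓝 0]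
      fun t => -(B + 2 * C * t) / (A + B * t + C * t ^ 2) ^ 2 := by
  have hne : ∀ᶠ t in 𝓝 (0 : ℝ), A + B * t + C * t ^ 2 ≠ 0 :=
    (hasDerivAt_quadratic A B C 0).continuousAt.eventually_ne (by simpa using hA)
  filter_upwards [hne] with t ht
  exact ((hasDerivAt_quadratic A B C t).inv ht).deriv

theorem deriv_deriv_inv_quadratic (hA : A ≠ 0) :
    deriv (deriv fun t => (A + B * t + C * t ^ 2)⁻¹) 0 = 2 * B ^ 2 / A ^ 3 - 2 * C / A ^ 2 := by
  rw [(deriv_inv_quadratic_eventuallyEq hA).deriv_eq]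
  have hnum : HasDerivAt (fun t => -(B + 2 * C * t)) (-(2 * C)) 0 := by
    simpa using (((hasDerivAt_id (0 : ℝ)).const_mul (2 * C)).const_add B).fun_neg
  have hden := (hasDerivAt_quadratic A B C 0).fun_pow 2
  rw [(hnum.fun_div hden (by simpa using pow_ne_zero 2 hA)).deriv]
  norm_num
  field_simp
  ring

theorem contDiffAt_inv_quadratic (n : WithTop ℕ∞) (hA : A ≠ 0) :
    ContDiffAt ℝ n (fun t => (A + B * t + C * t ^ 2)⁻¹) 0 :=
  (by fun_prop : ContDiffAt ℝ n (fun t => A + B * t + C * t ^ 2) 0).inv (by simpa using hA)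

end InvQuadratic

theorem deriv_deriv_sub_sub_const {f g : ℝ → ℝ} {x : ℝ} (c : ℝ) (hf : ContDiffAt ℝ 2 f x)
    (hg : ContDiffAt ℝ 2 g x) :
    deriv (deriv fun t => f t - g t - c) x = deriv (deriv f) x - deriv (deriv g) x := by
  have hc : deriv (fun t => f t - g t - c) = deriv fun t => f t - g t :=
    funext fun t => deriv_sub_const c
  rw [hc]
  simpa only [iteratedDeriv_succ, iteratedDeriv_zero] using iteratedDeriv_fun_sub hf hg

section InverseSquareDistance

variable {E : Type*} [NormedAddCommGroup E] [InnerProductSpace ℝ E] {x y : E}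

theorem contDiffAt_inv_norm_sq_line (n : WithTop ℕ∞) (hxy : x ≠ y) (v : E) :
    ContDiffAt ℝ n (fun t : ℝ => (‖x + t • v - y‖ ^ 2)⁻¹) 0 := by
  simp_rw [norm_add_smul_sub_sq]
  exact contDiffAt_inv_quadratic n (by simpa [sub_eq_zero] using hxy)

theorem deriv_deriv_inv_norm_sq_line (hxy : x ≠ y) (v : E) :
    deriv (deriv fun t : ℝ => (‖x + t • v - y‖ ^ 2)⁻¹) 0 =
      8 * ⟪v, x - y⟫ ^ 2 / ‖x - y‖ ^ 6 - 2 * ‖v‖ ^ 2 / ‖x - y‖ ^ 4 := by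
  simp_rw [norm_add_smul_sub_sq]
  rw [deriv_deriv_inv_quadratic (by simpa [sub_eq_zero] using hxy)]
  ring

end InverseSquareDistance

theorem tangential_curvature_nonpos {r₁ r₂ c₁ c₂ : ℝ} (hr₂ : 0 < r₂) (hr : r₂ ≤ r₁)
    (hc : c₁ / r₁ ^ 4 = c₂ / r₂ ^ 4) :
    8 * c₂ ^ 2 / r₂ ^ 6 - 2 / r₂ ^ 4 - (8 * c₁ ^ 2 / r₁ ^ 6 - 2 / r₁ ^ 4) ≤ 0 := by
  have hr₁ : 0 < r₁ := hr₂.trans_le hr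
  set k := c₁ / r₁ ^ 4
  have hc₁ : c₁ = k * r₁ ^ 4 := (div_mul_cancel₀ c₁ (by positivity)).symm
  have hc₂ : c₂ = k * r₂ ^ 4 := by rw [hc, div_mul_cancel₀ c₂ (by positivity)]
  calc 8 * c₂ ^ 2 / r₂ ^ 6 - 2 / r₂ ^ 4 - (8 * c₁ ^ 2 / r₁ ^ 6 - 2 / r₁ ^ 4)
      = 8 * k ^ 2 * (r₂ ^ 2 - r₁ ^ 2) + (2 / r₁ ^ 4 - 2 / r₂ ^ 4) := by
        rw [hc₁, hc₂]; field_simp; ring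
    _ ≤ 0 := by
      have h2 : r₂ ^ 2 ≤ r₁ ^ 2 := by gcongr
      have h4 : 2 / r₁ ^ 4 ≤ 2 / r₂ ^ 4 := by gcongr
      nlinarith [sq_nonneg k]

theorem sublevel_tangential_hessian_nonpos_general {d : ℕ}
    (y₁ y₂ x τ : EuclideanSpace ℝ (Fin d)) (a : ℝ)
    (ha : 0 ≤ a) (hx1 : x ≠ y₁) (hx2 : x ≠ y₂)
    (hψ0 : (‖x - y₂‖ ^ 2)⁻¹ - (‖x - y₁‖ ^ 2)⁻¹ - a = 0)
    (hτ : ‖τ‖ = 1)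
    (horth : (inner ℝ τ ((2 / ‖x - y₁‖ ^ 4) • (x - y₁) - (2 / ‖x - y₂‖ ^ 4) • (x - y₂)) : ℝ) = 0) :
    deriv (deriv (fun t : ℝ =>
      (‖x + t • τ - y₂‖ ^ 2)⁻¹ - (‖x + t • τ - y₁‖ ^ 2)⁻¹ - a)) 0 ≤ 0 := by
  have hr₁ : 0 < ‖x - y₁‖ := norm_pos_iff.2 (sub_ne_zero.2 hx1)
  have hr₂ : 0 < ‖x - y₂‖ := norm_pos_iff.2 (sub_ne_zero.2 hx2)
  have hr : ‖x - y₂‖ ≤ ‖x - y₁‖ := by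
    have hinv : (‖x - y₁‖ ^ 2)⁻¹ ≤ (‖x - y₂‖ ^ 2)⁻¹ := by linarith
    rw [inv_le_inv₀ (pow_pos hr₁ 2) (pow_pos hr₂ 2)] at hinv
    exact (pow_le_pow_iff_left₀ (norm_nonneg _) (norm_nonneg _) two_ne_zero).1 hinv
  have hc : ⟪τ, x - y₁⟫ / ‖x - y₁‖ ^ 4 = ⟪τ, x - y₂⟫ / ‖x - y₂‖ ^ 4 := by
    rw [inner_sub_right, real_inner_smul_right, real_inner_smul_right] at horth
    linear_combination horth / 2
  rw [deriv_deriv_sub_sub_const a (contDiffAt_inv_norm_sq_line 2 hx2 τ)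
      (contDiffAt_inv_norm_sq_line 2 hx1 τ), deriv_deriv_inv_norm_sq_line hx2,
    deriv_deriv_inv_norm_sq_line hx1, hτ, one_pow, mul_one]
  exact tangential_curvature_nonpos hr₂ hr hc

/-- For ψ(x) = |x−y₂|⁻² − |x−y₁|⁻² − a with a ≥ 0, at any point of {ψ = 0},
the second derivative of ψ in a unit direction τ orthogonal to ∇ψ(x) is ≤ 0. -/
theorem sublevel_tangential_hessian_nonpos {d : ℕ}
    (y₁ y₂ x τ : EuclideanSpace ℝ (Fin d)) (a : ℝ)
    (hy : y₁ ≠ y₂) (ha : 0 ≤ a) (hx1 : x ≠ y₁) (hx2 : x ≠ y₂)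
    (hψ0 : (‖x - y₂‖ ^ 2)⁻¹ - (‖x - y₁‖ ^ 2)⁻¹ - a = 0)
    (hτ : ‖τ‖ = 1)
    (horth : (inner ℝ τ ((2 / ‖x - y₁‖ ^ 4) • (x - y₁) - (2 / ‖x - y₂‖ ^ 4) • (x - y₂)) : ℝ) = 0) :
    deriv (deriv (fun t : ℝ =>
      (‖x + t • τ - y₂‖ ^ 2)⁻¹ - (‖x + t • τ - y₁‖ ^ 2)⁻¹ - a)) 0 ≤ 0 :=
  sublevel_tangential_hessian_nonpos_general y₁ y₂ x τ a ha hx1 hx2 hψ0 hτ horth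
end

section
/- Let ψ : ℝ^d → ℝ be C² with ∇ψ ≠ 0 on {ψ = 0}, and suppose that at every boundary point x ∈ {ψ = 0} the Hessian satisfies ∂²ψ(x)τ·τ > 0 for all nonzero τ with τ·∇ψ(x) = 0. If Ω = {ψ < 0} is bounded, nonempty, and connected, then Ω is convex. -/
/-!
If `ψ ≤ 0` along a segment with endpoints in `Ω = {ψ < 0}`, then `ψ < 0` on all of it: a
zero of `ψ` on the segment would be an interior maximum of `ψ` along the segment, so the
direction of the segment is tangent to `{ψ = 0}` there, while the second derivative along it is
`≤ 0`, contradicting the tangential Hessian bound. Hence the two open conditions `[a, b] ⊆ Ω`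
and "`[a, b]` meets `{ψ > 0}`" are disjoint and cover `Ω × Ω`; the first holds on the
diagonal, so by connectedness of `Ω × Ω` it holds everywhere.
-/

open Set Filter Topology Convex

theorem IsLocalMax.deriv_deriv_nonpos {f : ℝ → ℝ} {x₀ : ℝ} (h : IsLocalMax f x₀)
    (hc : ContinuousAt f x₀) : deriv (deriv f) x₀ ≤ 0 := by
  by_contra! hpos
  have hmin := isLocalMin_of_deriv_deriv_pos hpos h.deriv_eq_zero hc
  have hconst : f =ᶠ[𝓝 x₀] fun _ => f x₀ :=
    (hmin.and h).mono fun _ hx => le_antisymm hx.2 hx.1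
  rw [hconst.deriv.deriv_eq, deriv_const', deriv_const] at hpos
  exact hpos.false

section TopologicalVectorSpace

variable {E : Type*} [AddCommGroup E] [Module ℝ E] [TopologicalSpace E] [IsTopologicalAddGroup E]
  [ContinuousSMul ℝ E]

theorem isOpen_setOf_segment_subset {s : Set E} (hs : IsOpen s) :
    IsOpen {p : E × E | [p.1 -[ℝ] p.2] ⊆ s} := by
  simp only [segment_eq_image_lineMap, image_subset_iff]
  refine isOpen_iff_eventually.2 fun p hp =>
    isCompact_Icc.eventually_forall_of_forall_eventually fun θ hθ => ?_
  have hF : Continuous fun q : (E × E) × ℝ => AffineMap.lineMap q.1.1 q.1.2 q.2 := by fun_prop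
  exact hF.continuousAt.preimage_mem_nhds (hs.mem_nhds (hp hθ))

theorem isOpen_setOf_segment_inter_nonempty {t : Set E} (ht : IsOpen t) :
    IsOpen {p : E × E | ([p.1 -[ℝ] p.2] ∩ t).Nonempty} := by
  have hunion : {p : E × E | ([p.1 -[ℝ] p.2] ∩ t).Nonempty} =
      ⋃ θ ∈ Icc (0 : ℝ) 1, (fun p : E × E => AffineMap.lineMap p.1 p.2 θ) ⁻¹' t := by
    ext p
    simp [segment_eq_image_lineMap, Set.Nonempty]
  rw [hunion]
  exact isOpen_biUnion fun θ _ => ht.preimage (by fun_prop)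

theorem IsPreconnected.convex_of_disjoint_segment_subset {s t : Set E} (hs : IsOpen s)
    (ht : IsOpen t) (hst : Disjoint s t) (hconn : IsPreconnected s)
    (hseg : ∀ a ∈ s, ∀ b ∈ s, Disjoint [a -[ℝ] b] t → [a -[ℝ] b] ⊆ s) :
    Convex ℝ s := by
  have hcover :
      s ×ˢ s ⊆ {p | [p.1 -[ℝ] p.2] ⊆ s} ∪ {p | ([p.1 -[ℝ] p.2] ∩ t).Nonempty} := by
    rintro ⟨a, b⟩ ⟨ha, hb⟩
    by_cases hab : Disjoint [a -[ℝ] b] t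
    · exact Or.inl (hseg a ha b hb hab)
    · exact Or.inr (not_disjoint_iff_nonempty_inter.1 hab)
  have hdisj :
      Disjoint {p : E × E | [p.1 -[ℝ] p.2] ⊆ s} {p | ([p.1 -[ℝ] p.2] ∩ t).Nonempty} :=
    Set.disjoint_left.2 fun _ hsub ⟨_, hx, hxt⟩ => Set.disjoint_left.1 hst (hsub hx) hxt
  refine convex_iff_segment_subset.2 fun a ha b hb => ?_
  have hdiag : (a, a) ∈ s ×ˢ s ∩ {p | [p.1 -[ℝ] p.2] ⊆ s} :=
    ⟨⟨ha, ha⟩, by simpa [segment_same] using ha⟩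
  exact (hconn.prod hconn).subset_left_of_subset_union (isOpen_setOf_segment_subset hs)
    (isOpen_setOf_segment_inter_nonempty ht) hdisj hcover ⟨_, hdiag⟩ (mk_mem_prod ha hb)

end TopologicalVectorSpace

theorem IsMaxOn.isLocalMax_line_of_mem_openSegment {E : Type*} [AddCommGroup E]
    [Module ℝ E] {f : E → ℝ} {a b x : E} (h : IsMaxOn f [a -[ℝ] b] x)
    (hx : x ∈ openSegment ℝ a b) :
    IsLocalMax (fun t : ℝ => f (x + t • (b - a))) 0 := by
  rw [openSegment_eq_image'] at hx
  obtain ⟨θ, ⟨hθ₀, hθ₁⟩, rfl⟩ := hx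
  filter_upwards [Icc_mem_nhds (neg_lt_zero.2 hθ₀) (sub_pos.2 hθ₁)] with t ⟨ht₀, ht₁⟩
  rw [zero_smul, add_zero]
  refine h ((segment_eq_image' ℝ a b).symm ▸ ⟨θ + t, ⟨by linarith, by linarith⟩, ?_⟩)
  module

section InnerProductSpace

variable {E : Type*} [NormedAddCommGroup E] [InnerProductSpace ℝ E] [CompleteSpace E]

theorem IsLocalMax.inner_gradient_eq_zero {ψ : E → ℝ} {x τ : E}
    (hψ : DifferentiableAt ℝ ψ x) (hmax : IsLocalMax (fun t : ℝ => ψ (x + t • τ)) 0) :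
    inner ℝ τ (gradient ψ x) = 0 := by
  rw [real_inner_comm, inner_gradient_left]
  exact hmax.hasDerivAt_eq_zero (hψ.hasFDerivAt.hasLineDerivAt τ)

theorem segment_subset_setOf_neg {ψ : E → ℝ} (hψ : Differentiable ℝ ψ)
    (hhess : ∀ x, ψ x = 0 → ∀ τ : E, τ ≠ 0 → inner ℝ τ (gradient ψ x) = 0 →
      0 < deriv (deriv fun t : ℝ => ψ (x + t • τ)) 0)
    {a b : E} (ha : ψ a < 0) (hb : ψ b < 0) (hle : ∀ x ∈ [a -[ℝ] b], ψ x ≤ 0) :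
    [a -[ℝ] b] ⊆ {x | ψ x < 0} := by
  intro x hx
  by_contra! hx0
  have hzero : ψ x = 0 := le_antisymm (hle x hx) (not_lt.1 hx0)
  have hxa : x ≠ a := by rintro rfl; linarith
  have hxb : x ≠ b := by rintro rfl; linarith
  have hba : b - a ≠ 0 := sub_ne_zero.2 fun h => hxa (by simpa [h] using hx)
  have hmax : IsLocalMax (fun t : ℝ => ψ (x + t • (b - a))) 0 :=
    (isMaxOn_iff.2 fun y hy => hzero ▸ hle y hy).isLocalMax_line_of_mem_openSegment
      (mem_openSegment_of_ne_left_right hxa.symm hxb.symm hx)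
  have hcont : ContinuousAt (fun t : ℝ => ψ (x + t • (b - a))) 0 := by
    have := hψ.continuous
    fun_prop
  exact (hhess x hzero _ hba (hmax.inner_gradient_eq_zero (hψ x))).not_ge
    (hmax.deriv_deriv_nonpos hcont)

end InnerProductSpace

theorem tangential_hessian_pos_implies_convex_general {d : ℕ}
    (ψ : EuclideanSpace ℝ (Fin d) → ℝ) (hψ : ContDiff ℝ 2 ψ)
    (hhess : ∀ x, ψ x = 0 → ∀ τ : EuclideanSpace ℝ (Fin d), τ ≠ 0 →
      (inner ℝ τ (gradient ψ x) : ℝ) = 0 →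
        0 < deriv (deriv (fun t : ℝ => ψ (x + t • τ))) 0)
    (hconn : IsConnected {x : EuclideanSpace ℝ (Fin d) | ψ x < 0}) :
    Convex ℝ {x : EuclideanSpace ℝ (Fin d) | ψ x < 0} := by
  have hcont : Continuous ψ := hψ.continuous
  have hdisj : Disjoint {x | ψ x < 0} {x | 0 < ψ x} :=
    Set.disjoint_left.2 fun x (hneg : ψ x < 0) (hpos : 0 < ψ x) => hneg.not_gt hpos
  refine hconn.isPreconnected.convex_of_disjoint_segment_subset
    (isOpen_lt hcont continuous_const) (isOpen_lt continuous_const hcont) hdisj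
    fun a ha b hb hab => ?_
  exact segment_subset_setOf_neg (hψ.differentiable two_ne_zero) hhess ha hb
    fun x hx => not_lt.1 (Set.disjoint_left.1 hab hx)

/-- Sufficiency direction of the level-set convexity criterion: if the Hessian of ψ is
strictly positive on tangent directions of {ψ = 0} and Ω = {ψ < 0} is bounded, nonempty
and connected, then Ω is convex. -/
theorem tangential_hessian_pos_implies_convex {d : ℕ}
    (ψ : EuclideanSpace ℝ (Fin d) → ℝ) (hψ : ContDiff ℝ 2 ψ)
    (hgrad : ∀ x, ψ x = 0 → gradient ψ x ≠ 0)
    (hhess : ∀ x, ψ x = 0 → ∀ τ : EuclideanSpace ℝ (Fin d), τ ≠ 0 →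
      (inner ℝ τ (gradient ψ x) : ℝ) = 0 →
        0 < deriv (deriv (fun t : ℝ => ψ (x + t • τ))) 0)
    (hbd : Bornology.IsBounded {x : EuclideanSpace ℝ (Fin d) | ψ x < 0})
    (hne : {x : EuclideanSpace ℝ (Fin d) | ψ x < 0}.Nonempty)
    (hconn : IsConnected {x : EuclideanSpace ℝ (Fin d) | ψ x < 0}) :
    Convex ℝ {x : EuclideanSpace ℝ (Fin d) | ψ x < 0} :=
  tangential_hessian_pos_implies_convex_general ψ hψ hhess hconn
end
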